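/- arXiv:2604.07178 — 2 statements merged into one kernel-verified Lean document; each statement's English description precedes it below -/
import Mathlib

section
/- Let U be a unitary on n qubits implemented by a depth-d QAC circuit. Then there exists a depth-7d 2D-QAC circuit V on the (n+1)×n lattice of qubits, with the first row holding the n input qubits and the remaining n rows holding n² ancilla qubits, such that for every n-qubit state |φ⟩: V(|φ⟩ ⊗ |1^{n²}⟩) = (U|φ⟩) ⊗ |1^{n²}⟩. -/
/-- A layer of arbitrary single-qubit unitaries on qubits indexed by `ι`,
written as a matrix in the computational basis (indexed by `ι → Bool`):
the entrywise tensor product of single-qubit unitaries. -/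
def IsSingleQubitLayer {ι : Type*} [Fintype ι] [DecidableEq ι]
    (L : Matrix (ι → Bool) (ι → Bool) ℂ) : Prop :=
  ∃ u : ι → Matrix Bool Bool ℂ,
    (∀ i, u i ∈ Matrix.unitaryGroup Bool ℂ) ∧
    ∀ x y, L x y = ∏ i, u i (x i) (y i)

/-- A layer of CZ gates acting on pairwise disjoint supports, each support
required to satisfy the predicate `P`.  The CZ gate on a set `T` maps a basis
state `|x⟩` to `−|x⟩` if `x` is all ones on `T` and fixes it otherwise; a layer
is the corresponding diagonal matrix. -/
def IsCZLayer {ι : Type*} [Fintype ι] [DecidableEq ι] (P : Finset ι → Prop)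
    (M : Matrix (ι → Bool) (ι → Bool) ℂ) : Prop :=
  ∃ 𝒯 : Finset (Finset ι),
    (∀ T ∈ 𝒯, P T) ∧
    ((𝒯 : Set (Finset ι)).Pairwise fun T T' => Disjoint T T') ∧
    ∀ x y, M x y =
      if x = y then ∏ T ∈ 𝒯, (if ∀ i ∈ T, x i = true then (-1 : ℂ) else 1)
      else 0

/-- A depth-`d` QAC circuit whose CZ-gate supports are constrained by `P`:
`C = L_d · M_d ⋯ L_1 · M_1 · L_0` with `L_t` layers of single-qubit unitaries
and `M_t` layers of CZ gates on pairwise disjoint supports satisfying `P`. -/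
def IsQACOn {ι : Type*} [Fintype ι] [DecidableEq ι] (P : Finset ι → Prop) :
    ℕ → Matrix (ι → Bool) (ι → Bool) ℂ → Prop
  | 0, C => IsSingleQubitLayer C
  | d + 1, C => ∃ L M C', IsSingleQubitLayer L ∧ IsCZLayer P M ∧
      IsQACOn P d C' ∧ C = L * M * C'

/-- A contiguous interval of qubits on the line `Fin m`. -/
def IsInterval1D {m : ℕ} (T : Finset (Fin m)) : Prop :=
  ∀ a b c : Fin m, a ∈ T → c ∈ T → a ≤ b → b ≤ c → b ∈ T

/-- A depth-`d` 1D-QAC circuit on `m` qubits arranged on a line: every CZ gate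
acts on a contiguous interval of qubits. -/
def Is1DQAC {m : ℕ} (d : ℕ) (C : Matrix (Fin m → Bool) (Fin m → Bool) ℂ) :
    Prop :=
  IsQACOn IsInterval1D d C

/-- A depth-`d` QAC circuit on qubits indexed by `ι` with all-to-all
connectivity: the CZ gates may act on arbitrary subsets of qubits. -/
def IsQAC {ι : Type*} [Fintype ι] [DecidableEq ι] (d : ℕ)
    (C : Matrix (ι → Bool) (ι → Bool) ℂ) : Prop :=
  IsQACOn (fun _ => True) d C

/-- A contiguous interval of qubits lying within a single row or a single
column of the `w × n` lattice. -/
def IsRowColInterval (w n : ℕ) (T : Finset (Fin w × Fin n)) : Prop :=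
  (∃ (i : Fin w) (a b : Fin n), T = {i} ×ˢ Finset.Icc a b) ∨
  (∃ (j : Fin n) (a b : Fin w), T = Finset.Icc a b ×ˢ {j})

/-- A depth-`d` 2D-QAC circuit on a `w × n` lattice of qubits: every CZ gate
acts on a contiguous interval within a single row or column. -/
def Is2DQAC (w n d : ℕ)
    (C : Matrix (Fin w × Fin n → Bool) (Fin w × Fin n → Bool) ℂ) : Prop :=
  IsQACOn (IsRowColInterval w n) d C

/-!
A QAC layer `L · M` is simulated by a 2D layer of depth 3, so `d` layers need depth `3d ≤ 7d`.
Column `j` of the ancilla grid belongs to input qubit `j`, and a CZ gate `T` of `M` gets the row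
`min T + 1`. With an `X` the ancilla of column `j ∈ T` in that row is set to `0`, and Hadamards
around the CZ on the column interval from the top down to it (all ancillas in between are `1`)
turn that CZ into a CNOT copying `x_j` there. The CZ on the full row `min T + 1` then sees `x_j`
in the columns of `T` and `1` elsewhere, so it applies exactly the phase of `T`. Uncomputing the
copy restores the ancillas to `1`, and `L` acts on the top row.
-/
open Matrix Finset

section PiKron

variable {ι β R : Type*} [Fintype ι] [CommSemiring R]

def piKron (K : ι → Matrix β β R) : Matrix (ι → β) (ι → β) R :=
  of fun x y => ∏ i, K i (x i) (y i)

@[simp]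
theorem piKron_apply (K : ι → Matrix β β R) (x y : ι → β) :
    piKron K x y = ∏ i, K i (x i) (y i) := rfl

theorem piKron_one [DecidableEq β] : piKron (1 : ι → Matrix β β R) = 1 := by
  ext x y
  simp only [piKron_apply, Pi.one_apply, one_apply, prod_ite_zero, prod_const_one, funext_iff,
    mem_univ, true_implies]

variable [DecidableEq ι] [Fintype β]

theorem piKron_mulVec_prod (K : ι → Matrix β β R) (f : ι → β → R) :
    piKron K *ᵥ (fun y => ∏ i, f i (y i)) = fun x => ∏ i, (K i *ᵥ f i) (x i) := by
  funext x
  simp only [mulVec, dotProduct, piKron_apply, ← prod_mul_distrib]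
  exact (Fintype.prod_sum fun i b => K i (x i) b * f i b).symm

theorem piKron_mul (K K' : ι → Matrix β β R) : piKron K * piKron K' = piKron (K * K') := by
  ext x y
  simp only [mul_apply, piKron_apply, ← prod_mul_distrib, Pi.mul_apply]
  exact (Fintype.prod_sum fun i b => K i (x i) b * K' i b (y i)).symm

theorem piKron_mulSingle_mulVec [DecidableEq β] (a : ι) (A : Matrix β β R) (g : (ι → β) → R) :
    piKron (Pi.mulSingle a A) *ᵥ g = fun x => ∑ b, A (x a) b * g (Function.update x a b) := by
  funext x
  have hentry : ∀ y, piKron (Pi.mulSingle a A) x y =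
      ∑ b, if y = Function.update x a b then A (x a) b else 0 := by
    intro y
    have hrest : ∏ i ∈ univ.erase a, (Pi.mulSingle a A : ι → Matrix β β R) i (x i) (y i) =
        if ∀ i ≠ a, y i = x i then 1 else 0 := by
      rw [prod_congr rfl fun i hi => by rw [Pi.mulSingle_eq_of_ne (ne_of_mem_erase hi), one_apply],
        prod_ite_zero, prod_const_one]
      simp only [mem_erase, mem_univ, and_true, eq_comm]
    simp only [Function.eq_update_iff, ite_and, sum_ite_eq, mem_univ, if_true]
    rw [piKron_apply, ← mul_prod_erase univ _ (mem_univ a), Pi.mulSingle_eq_same, hrest]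
    split_ifs <;> simp
  simp only [mulVec, dotProduct, hentry, sum_mul, ite_mul, zero_mul]
  rw [sum_comm]
  simp

end PiKron

section Circuits

variable {ι : Type*} [Fintype ι] [DecidableEq ι]

theorem isSingleQubitLayer_iff {L : Matrix (ι → Bool) (ι → Bool) ℂ} :
    IsSingleQubitLayer L ↔ ∃ u : ι → Matrix Bool Bool ℂ,
      (∀ i, u i ∈ unitaryGroup Bool ℂ) ∧ L = piKron u := by
  simp only [IsSingleQubitLayer, ← piKron_apply, ← Matrix.ext_iff]

theorem isSingleQubitLayer_piKron {u : ι → Matrix Bool Bool ℂ}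
    (hu : ∀ i, u i ∈ unitaryGroup Bool ℂ) : IsSingleQubitLayer (piKron u) :=
  isSingleQubitLayer_iff.2 ⟨u, hu, rfl⟩

theorem IsSingleQubitLayer.mul {L L' : Matrix (ι → Bool) (ι → Bool) ℂ}
    (hL : IsSingleQubitLayer L) (hL' : IsSingleQubitLayer L') : IsSingleQubitLayer (L * L') := by
  obtain ⟨u, hu, rfl⟩ := isSingleQubitLayer_iff.1 hL
  obtain ⟨v, hv, rfl⟩ := isSingleQubitLayer_iff.1 hL'
  rw [piKron_mul]
  exact isSingleQubitLayer_piKron fun i => mul_mem (hu i) (hv i)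

theorem isSingleQubitLayer_one : IsSingleQubitLayer (1 : Matrix (ι → Bool) (ι → Bool) ℂ) := by
  rw [← piKron_one]
  exact isSingleQubitLayer_piKron fun _ => one_mem _

def czPhase (𝒮 : Finset (Finset ι)) (x : ι → Bool) : ℂ :=
  ∏ T ∈ 𝒮, if ∀ i ∈ T, x i = true then -1 else 1

theorem isCZLayer_iff {P : Finset ι → Prop} {M : Matrix (ι → Bool) (ι → Bool) ℂ} :
    IsCZLayer P M ↔ ∃ 𝒮 : Finset (Finset ι), (∀ T ∈ 𝒮, P T) ∧
      (𝒮 : Set (Finset ι)).PairwiseDisjoint id ∧ M = diagonal (czPhase 𝒮) := by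
  simp only [IsCZLayer, czPhase, ← Matrix.ext_iff, diagonal_apply]
  rfl

variable {P : Finset ι → Prop}

theorem IsQACOn.mul {a b : ℕ} {A B : Matrix (ι → Bool) (ι → Bool) ℂ}
    (hA : IsQACOn P a A) (hB : IsQACOn P b B) : IsQACOn P (a + b) (A * B) := by
  induction a generalizing A with
  | zero =>
    cases b with
    | zero => exact IsSingleQubitLayer.mul hA hB
    | succ b =>
      obtain ⟨L, M, C, hL, hM, hC, rfl⟩ := hB
      rw [zero_add]
      exact ⟨A * L, M, C, IsSingleQubitLayer.mul hA hL, hM, hC, by simp only [Matrix.mul_assoc]⟩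
  | succ a ih =>
    obtain ⟨L, M, C, hL, hM, hC, rfl⟩ := hA
    rw [Nat.succ_add]
    exact ⟨L, M, C * B, hL, hM, ih hC, by simp only [Matrix.mul_assoc]⟩

theorem isQACOn_one (d : ℕ) : IsQACOn P d (1 : Matrix (ι → Bool) (ι → Bool) ℂ) := by
  induction d with
  | zero => exact isSingleQubitLayer_one
  | succ d ih =>
    have hM : IsCZLayer P (1 : Matrix (ι → Bool) (ι → Bool) ℂ) :=
      isCZLayer_iff.2 ⟨∅, by simp, by simp only [coe_empty, Set.pairwiseDisjoint_empty],
        by rw [← diagonal_one]; congr⟩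
    exact ⟨1, 1, 1, isSingleQubitLayer_one, hM, ih, by simp⟩

theorem IsQACOn.mono {a b : ℕ} {C : Matrix (ι → Bool) (ι → Bool) ℂ} (hC : IsQACOn P a C)
    (hab : a ≤ b) : IsQACOn P b C := by
  simpa [Nat.sub_add_cancel hab] using (isQACOn_one (P := P) (b - a)).mul hC

end Circuits

noncomputable def hadamardGate : Matrix Bool Bool ℂ :=
  of fun x y => if x && y then -(Real.sqrt 2 : ℂ)⁻¹ else (Real.sqrt 2 : ℂ)⁻¹

def pauliX : Matrix Bool Bool ℂ :=
  of fun x y => if x = y then 0 else 1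

theorem inv_sqrt_two_mul_self : (Real.sqrt 2 : ℂ)⁻¹ * (Real.sqrt 2 : ℂ)⁻¹ = 2⁻¹ := by
  rw [← mul_inv, ← Complex.ofReal_mul, Real.mul_self_sqrt zero_le_two]
  norm_num

theorem hadamardGate_mul_self : hadamardGate * hadamardGate = 1 := by
  ext x y
  cases x <;> cases y <;> simp [hadamardGate, mul_apply, inv_sqrt_two_mul_self]
  norm_num

theorem pauliX_mul_self : pauliX * pauliX = 1 := by
  ext x y
  cases x <;> cases y <;> simp [pauliX, mul_apply]

theorem hadamardGate_mem_unitaryGroup : hadamardGate ∈ unitaryGroup Bool ℂ := by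
  have hstar : star hadamardGate = hadamardGate := by
    ext x y
    cases x <;> cases y <;> simp [hadamardGate, Complex.conj_ofReal]
  rw [mem_unitaryGroup_iff', hstar, hadamardGate_mul_self]

theorem pauliX_mem_unitaryGroup : pauliX ∈ unitaryGroup Bool ℂ := by
  have hstar : star pauliX = pauliX := by
    ext x y
    cases x <;> cases y <;> simp [pauliX]
  rw [mem_unitaryGroup_iff', hstar, pauliX_mul_self]

theorem piKron_mulSingle_mul_self {ι β : Type*} [Fintype ι] [DecidableEq ι] [Fintype β]
    [DecidableEq β] (a : ι) {A : Matrix β β ℂ} (hA : A * A = 1) :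
    piKron (Pi.mulSingle a A) * piKron (Pi.mulSingle a A) = 1 := by
  rw [piKron_mul, ← Pi.mulSingle_mul, hA, Pi.mulSingle_one, piKron_one]

theorem diagonal_czPhase_mul_self {ι : Type*} [Fintype ι] [DecidableEq ι]
    (𝒮 : Finset (Finset ι)) : diagonal (czPhase 𝒮) * diagonal (czPhase 𝒮) = 1 := by
  rw [diagonal_mul_diagonal, ← diagonal_one]
  congr 1
  funext x
  simp only [czPhase, ← prod_mul_distrib]
  exact prod_eq_one fun T _ => by split_ifs <;> norm_num

section Column

variable {m : ℕ}

def ancillaOnes (c : Fin (m + 1) → Bool) : ℂ :=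
  if ∀ i, i ≠ 0 → c i = true then 1 else 0

def spectatorState (a : Fin (m + 1)) (f : Bool → Bool → ℂ) (c : Fin (m + 1) → Bool) : ℂ :=
  if ∀ i, i ≠ 0 → i ≠ a → c i = true then f (c 0) (c a) else 0

def copyState (a : Fin (m + 1)) : (Fin (m + 1) → Bool) → ℂ :=
  spectatorState a fun x y => if y = x then 1 else 0

noncomputable def copyGate (a : Fin (m + 1)) :
    Matrix (Fin (m + 1) → Bool) (Fin (m + 1) → Bool) ℂ :=
  piKron (Pi.mulSingle a hadamardGate) * diagonal (czPhase {Icc 0 a}) *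
    piKron (Pi.mulSingle a hadamardGate) * piKron (Pi.mulSingle a pauliX)

noncomputable def uncopyGate (a : Fin (m + 1)) :
    Matrix (Fin (m + 1) → Bool) (Fin (m + 1) → Bool) ℂ :=
  piKron (Pi.mulSingle a pauliX) * piKron (Pi.mulSingle a hadamardGate) *
    diagonal (czPhase {Icc 0 a}) * piKron (Pi.mulSingle a hadamardGate)

def PreservesTop (K : Matrix (Fin (m + 1) → Bool) (Fin (m + 1) → Bool) ℂ) : Prop :=
  ∀ c c', c 0 ≠ c' 0 → K c c' = 0

def pinTop (b : Bool) (g : (Fin (m + 1) → Bool) → ℂ) (c : Fin (m + 1) → Bool) : ℂ :=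
  if c 0 = b then g c else 0

variable {a : Fin (m + 1)}

theorem ancillaOnes_eq_spectatorState (ha : a ≠ 0) :
    ancillaOnes = spectatorState a fun _ y => if y = true then 1 else 0 := by
  funext c
  unfold ancillaOnes spectatorState
  by_cases hc : ∀ i, i ≠ 0 → i ≠ a → c i = true
  · have : (∀ i, i ≠ 0 → c i = true) ↔ c a = true :=
      ⟨fun h => h a ha, fun h i hi => if hia : i = a then hia ▸ h else hc i hi hia⟩
    simp only [if_pos hc, this]
  · rw [if_neg hc, if_neg fun h => hc fun i hi _ => h i hi]

theorem piKron_mulSingle_mulVec_spectatorState (ha : a ≠ 0) (A : Matrix Bool Bool ℂ)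
    (f : Bool → Bool → ℂ) : piKron (Pi.mulSingle a A) *ᵥ spectatorState a f =
      spectatorState a fun x y => ∑ b, A y b * f x b := by
  rw [piKron_mulSingle_mulVec]
  funext c
  have hspect : ∀ b, (∀ i, i ≠ 0 → i ≠ a → Function.update c a b i = true) ↔
      ∀ i, i ≠ 0 → i ≠ a → c i = true := fun b =>
    forall_congr' fun i => imp_congr_right fun _ => forall_congr' fun hia => by
      rw [Function.update_of_ne hia]
  simp only [spectatorState, hspect, Function.update_self, Function.update_of_ne ha.symm]
  split_ifs <;> simp

theorem diagonal_czPhase_mulVec_spectatorState (f : Bool → Bool → ℂ) :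
    diagonal (czPhase {Icc 0 a}) *ᵥ spectatorState a f =
      spectatorState a fun x y => (if x && y then -1 else 1) * f x y := by
  funext c
  rw [mulVec_diagonal]
  unfold spectatorState
  split_ifs with hc
  · have : (∀ i ∈ Icc 0 a, c i = true) ↔ (c 0 && c a) = true := by
      simp only [Bool.and_eq_true, mem_Icc]
      refine ⟨fun h => ⟨h 0 ⟨le_rfl, Fin.zero_le a⟩, h a ⟨Fin.zero_le a, le_rfl⟩⟩,
        fun h i _ => ?_⟩
      by_cases hi : i = 0
      · exact hi ▸ h.1
      · by_cases hia : i = a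
        · exact hia ▸ h.2
        · exact hc i hi hia
    simp only [czPhase, prod_singleton, this]
  · rw [mul_zero]

theorem of_copyState_ne_zero {c : Fin (m + 1) → Bool} (h : copyState a c ≠ 0) :
    (∀ i, i ≠ 0 → i ≠ a → c i = true) ∧ c a = c 0 := by
  unfold copyState spectatorState at h
  by_cases hc : ∀ i, i ≠ 0 → i ≠ a → c i = true
  · rw [if_pos hc] at h
    exact ⟨hc, of_not_not fun hca => h (if_neg hca)⟩
  · exact absurd (if_neg hc) h

theorem copyGate_mulVec_ancillaOnes (ha : a ≠ 0) : copyGate a *ᵥ ancillaOnes = copyState a := by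
  simp only [copyGate, ← mulVec_mulVec, ancillaOnes_eq_spectatorState ha,
    piKron_mulSingle_mulVec_spectatorState ha, diagonal_czPhase_mulVec_spectatorState, copyState]
  congr
  funext x y
  cases x <;> cases y <;> norm_num [hadamardGate, pauliX, inv_sqrt_two_mul_self]

theorem uncopyGate_mul_copyGate : uncopyGate a * copyGate a = 1 := by
  set H := piKron (Pi.mulSingle a hadamardGate)
  set X := piKron (Pi.mulSingle a pauliX)
  set D := diagonal (czPhase {Icc 0 a})
  calc uncopyGate a * copyGate a = X * (H * (D * (H * H) * D) * H) * X := by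
        simp only [uncopyGate, copyGate, Matrix.mul_assoc]; rfl
    _ = 1 := by
        simp only [piKron_mulSingle_mul_self a hadamardGate_mul_self, diagonal_czPhase_mul_self,
          piKron_mulSingle_mul_self a pauliX_mul_self, Matrix.mul_one, H, X, D]

theorem uncopyGate_mulVec_copyState (ha : a ≠ 0) : uncopyGate a *ᵥ copyState a = ancillaOnes := by
  rw [← copyGate_mulVec_ancillaOnes ha, mulVec_mulVec, uncopyGate_mul_copyGate, one_mulVec]

theorem ancillaOnes_update_zero (c : Fin (m + 1) → Bool) (b : Bool) :
    ancillaOnes (Function.update c 0 b) = ancillaOnes c := by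
  unfold ancillaOnes
  congr 1
  exact propext (forall_congr' fun i => imp_congr_right fun hi => by
    rw [Function.update_of_ne hi])

theorem PreservesTop.mul {K K' : Matrix (Fin (m + 1) → Bool) (Fin (m + 1) → Bool) ℂ}
    (hK : PreservesTop K) (hK' : PreservesTop K') : PreservesTop (K * K') := fun c c' h => by
  rw [mul_apply]
  refine sum_eq_zero fun d _ => ?_
  by_cases hd : c 0 = d 0
  · rw [hK' d c' (hd ▸ h), mul_zero]
  · rw [hK c d hd, zero_mul]

theorem preservesTop_diagonal (θ : (Fin (m + 1) → Bool) → ℂ) : PreservesTop (diagonal θ) :=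
  fun _ _ h => diagonal_apply_ne _ fun e => h (e ▸ rfl)

theorem preservesTop_piKron_mulSingle (ha : a ≠ 0) (A : Matrix Bool Bool ℂ) :
    PreservesTop (piKron (Pi.mulSingle a A)) := fun _ _ h => by
  rw [piKron_apply]
  refine prod_eq_zero (mem_univ 0) ?_
  rw [Pi.mulSingle_eq_of_ne ha.symm]
  exact one_apply_ne h

theorem preservesTop_copyGate (ha : a ≠ 0) : PreservesTop (copyGate a) :=
  (((preservesTop_piKron_mulSingle ha _).mul (preservesTop_diagonal _)).mul
    (preservesTop_piKron_mulSingle ha _)).mul (preservesTop_piKron_mulSingle ha _)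

theorem preservesTop_uncopyGate (ha : a ≠ 0) : PreservesTop (uncopyGate a) :=
  (((preservesTop_piKron_mulSingle ha _).mul (preservesTop_piKron_mulSingle ha _)).mul
    (preservesTop_diagonal _)).mul (preservesTop_piKron_mulSingle ha _)

theorem PreservesTop.mulVec_pinTop {K : Matrix (Fin (m + 1) → Bool) (Fin (m + 1) → Bool) ℂ}
    (hK : PreservesTop K) (b : Bool) (g : (Fin (m + 1) → Bool) → ℂ) :
    K *ᵥ pinTop b g = pinTop b (K *ᵥ g) := by
  funext c
  simp only [pinTop, mulVec, dotProduct, mul_ite, mul_zero]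
  split_ifs with hc
  · exact sum_congr rfl fun c' _ => by
      split_ifs with hc'
      · rfl
      · rw [hK c c' (hc ▸ Ne.symm hc'), zero_mul]
  · exact sum_eq_zero fun c' _ => by
      split_ifs with hc'
      · rw [hK c c' (hc' ▸ hc), zero_mul]
      · rfl

theorem piKron_mulSingle_zero_mulVec_pinTop (A : Matrix Bool Bool ℂ) (b : Bool)
    {g : (Fin (m + 1) → Bool) → ℂ} (hg : ∀ c b', g (Function.update c 0 b') = g c) :
    piKron (Pi.mulSingle 0 A) *ᵥ pinTop b g = fun c => A (c 0) b * g c := by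
  rw [piKron_mulSingle_mulVec]
  funext c
  simp [pinTop, hg]

end Column

section Lattice

variable {m : ℕ} {ι : Type*} [Fintype ι]

def columnEquiv : (Fin (m + 1) × ι → Bool) ≃ (ι → Fin (m + 1) → Bool) where
  toFun z j i := z (i, j)
  invFun c p := c p.2 p.1
  left_inv _ := rfl
  right_inv _ := rfl

def colKron (K : ι → Matrix (Fin (m + 1) → Bool) (Fin (m + 1) → Bool) ℂ) :
    Matrix (Fin (m + 1) × ι → Bool) (Fin (m + 1) × ι → Bool) ℂ :=
  (piKron K).submatrix columnEquiv columnEquiv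

/-- The column factors may depend on the top qubit of their column: this is how the copies of the
input qubits made in the ancilla rows are kept track of. -/
def colState (ψ : (ι → Bool) → ℂ) (G : ι → (Fin (m + 1) → Bool) → ℂ)
    (z : Fin (m + 1) × ι → Bool) : ℂ :=
  ψ (fun j => z (0, j)) * ∏ j, G j (fun i => z (i, j))

theorem piKron_eq_colKron (u : Fin (m + 1) × ι → Matrix Bool Bool ℂ) :
    piKron u = colKron fun j => piKron fun i => u (i, j) := by
  ext z y
  simp [colKron, columnEquiv, Fintype.prod_prod_type_right]

theorem diagonal_eq_colKron (θ : ι → (Fin (m + 1) → Bool) → ℂ) :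
    diagonal (fun z => ∏ j, θ j (fun i => z (i, j))) = colKron fun j => diagonal (θ j) := by
  ext z y
  simp only [colKron, submatrix_apply, piKron_apply, diagonal_apply, prod_ite_zero, mem_univ,
    true_implies]
  congr 1
  exact propext (columnEquiv.injective.eq_iff.symm.trans funext_iff)

theorem colState_ancillaOnes (φ : (ι → Bool) → ℂ) :
    colState φ (fun _ => ancillaOnes) = fun z =>
      if ∀ p : Fin (m + 1) × ι, p.1 ≠ 0 → z p = true then φ (fun j => z (0, j)) else 0 := by
  funext z
  simp only [colState, ancillaOnes, prod_ite_zero, prod_const_one, mem_univ, true_implies,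
    mul_ite, mul_one, mul_zero, Prod.forall]
  congr 1
  exact propext forall_comm

variable [DecidableEq ι]

theorem colKron_mul (K K' : ι → Matrix (Fin (m + 1) → Bool) (Fin (m + 1) → Bool) ℂ) :
    colKron K * colKron K' = colKron (K * K') := by
  rw [colKron, colKron, submatrix_mul_equiv, piKron_mul, colKron]

theorem colKron_mulVec_prod (K : ι → Matrix (Fin (m + 1) → Bool) (Fin (m + 1) → Bool) ℂ)
    (G : ι → (Fin (m + 1) → Bool) → ℂ) :
    colKron K *ᵥ (fun y => ∏ j, G j (fun i => y (i, j))) =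
      fun z => ∏ j, (K j *ᵥ G j) (fun i => z (i, j)) := by
  rw [colKron, submatrix_mulVec_equiv]
  exact congrArg (· ∘ columnEquiv) (piKron_mulVec_prod K G)

theorem colState_eq_sum (ψ : (ι → Bool) → ℂ) (G : ι → (Fin (m + 1) → Bool) → ℂ) :
    colState ψ G = ∑ x, ψ x • fun z => ∏ j, pinTop (x j) (G j) (fun i => z (i, j)) := by
  funext z
  have htop : ∀ x : ι → Bool, (∀ j, z (0, j) = x j) ↔ (fun j => z (0, j)) = x :=
    fun _ => funext_iff.symm
  simp only [colState, pinTop, Finset.sum_apply, Pi.smul_apply, smul_eq_mul, prod_ite_zero,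
    mem_univ, true_implies, htop, mul_ite, mul_zero, sum_ite_eq, if_true]

noncomputable def topLayer (u : ι → Matrix Bool Bool ℂ) :
    Matrix (Fin (m + 1) × ι → Bool) (Fin (m + 1) × ι → Bool) ℂ :=
  colKron fun j => piKron (Pi.mulSingle 0 (u j))

theorem isSingleQubitLayer_colKron_mulSingle (a : ι → Fin (m + 1)) {u : ι → Matrix Bool Bool ℂ}
    (hu : ∀ j, u j ∈ unitaryGroup Bool ℂ) :
    IsSingleQubitLayer (colKron fun j => piKron (Pi.mulSingle (a j) (u j))) := by
  have h : (colKron fun j => piKron (Pi.mulSingle (a j) (u j))) =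
      piKron fun p : Fin (m + 1) × ι => (Pi.mulSingle (a p.2) (u p.2) : Fin (m + 1) → _) p.1 := by
    rw [piKron_eq_colKron]
  rw [h]
  refine isSingleQubitLayer_piKron fun p => ?_
  rw [Pi.mulSingle_apply]
  split_ifs
  exacts [hu p.2, one_mem _]

variable {K : ι → Matrix (Fin (m + 1) → Bool) (Fin (m + 1) → Bool) ℂ}

theorem colKron_mulVec_colState (hK : ∀ j, PreservesTop (K j)) (ψ : (ι → Bool) → ℂ)
    (G : ι → (Fin (m + 1) → Bool) → ℂ) :
    colKron K *ᵥ colState ψ G = colState ψ fun j => K j *ᵥ G j := by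
  simp only [colState_eq_sum, mulVec_sum, mulVec_smul, colKron_mulVec_prod,
    fun j => (hK j).mulVec_pinTop]

theorem colKron_mulSingle_zero_mulVec_colState (u : ι → Matrix Bool Bool ℂ)
    (ψ : (ι → Bool) → ℂ) {G : ι → (Fin (m + 1) → Bool) → ℂ}
    (hG : ∀ j c b, G j (Function.update c 0 b) = G j c) :
    colKron (fun j => piKron (Pi.mulSingle 0 (u j))) *ᵥ colState ψ G =
      colState (piKron u *ᵥ ψ) G := by
  rw [colState_eq_sum, mulVec_sum]
  funext z
  simp only [mulVec_smul, colKron_mulVec_prod,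
    fun j b => piKron_mulSingle_zero_mulVec_pinTop (u j) b (hG j)]
  simp only [Finset.sum_apply, Pi.smul_apply, smul_eq_mul, prod_mul_distrib, colState, mulVec,
    dotProduct, piKron_apply, sum_mul]
  exact sum_congr rfl fun x _ => by ring

end Lattice

section Gadget

variable {n : ℕ} (𝒯 : Finset (Finset (Fin n)))

/-- The ancilla row used by qubit `j` is `anchor 𝒯 j + 1`: the least element of the gate of `𝒯`
containing `j`, or `j` itself if there is none. Distinct gates thus get distinct rows, and the
rows of the gates are never used by qubits outside them. -/
def anchor (j : Fin n) : Fin n :=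
  (insert j ((𝒯.filter (j ∈ ·)).biUnion id)).min' (insert_nonempty _ _)

/-- The CZ gate on the empty set is the global phase `-1`, so an empty gate stays empty. -/
def rowGate (T : Finset (Fin n)) : Finset (Fin (n + 1) × Fin n) :=
  if h : T.Nonempty then {(T.min' h).succ} ×ˢ univ else ∅

def colGate (j : Fin n) : Finset (Fin (n + 1) × Fin n) :=
  Icc 0 (anchor 𝒯 j).succ ×ˢ {j}

theorem isRowColInterval_rowGate [NeZero n] (T : Finset (Fin n)) :
    IsRowColInterval (n + 1) n (rowGate T) := by
  unfold rowGate
  split_ifs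
  · exact Or.inl ⟨_, ⊥, ⊤, by rw [Icc_bot_top]⟩
  · exact Or.inr ⟨0, 1, 0, by rw [Icc_eq_empty (not_le.2 Fin.one_pos'), empty_product]⟩

theorem isCZLayer_colGates :
    IsCZLayer (IsRowColInterval (n + 1) n) (diagonal (czPhase (univ.image (colGate 𝒯)))) := by
  refine isCZLayer_iff.2 ⟨_, ?_, ?_, rfl⟩
  · simp only [mem_image, mem_univ, true_and, forall_exists_index, forall_apply_eq_imp_iff]
    exact fun j => Or.inr ⟨j, 0, _, rfl⟩
  · simp only [coe_image, coe_univ, Set.image_univ]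
    rintro _ ⟨j, rfl⟩ _ ⟨j', rfl⟩ hne
    exact disjoint_product.2 (Or.inr (disjoint_singleton.2 fun h => hne (h ▸ rfl)))

theorem diagonal_czPhase_colGates :
    diagonal (czPhase (univ.image (colGate 𝒯))) =
      colKron fun j => diagonal (czPhase {Icc 0 (anchor 𝒯 j).succ}) := by
  have hinj : Set.InjOn (colGate 𝒯) (univ : Finset (Fin n)) := fun j _ j' _ h => by
    have : ((0 : Fin (n + 1)), j) ∈ colGate 𝒯 j' := h ▸ by simp [colGate]
    exact (by simpa [colGate] using this : j' = j).symm
  rw [← diagonal_eq_colKron]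
  congr 1
  funext z
  simp [czPhase, prod_image hinj, colGate]

variable {𝒯}

theorem anchor_eq_self {j : Fin n} (hj : ∀ T ∈ 𝒯, j ∉ T) : anchor 𝒯 j = j := by
  have hfilter : 𝒯.filter (j ∈ ·) = ∅ := filter_eq_empty_iff.2 hj
  simp only [anchor, hfilter, biUnion_empty, insert_empty, min'_singleton]

variable (h𝒯 : (𝒯 : Set (Finset (Fin n))).PairwiseDisjoint id)
include h𝒯

theorem anchor_eq {T : Finset (Fin n)} (hT : T ∈ 𝒯) {j : Fin n} (hj : j ∈ T) :
    anchor 𝒯 j = T.min' ⟨j, hj⟩ := by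
  have hfilter : 𝒯.filter (j ∈ ·) = {T} := by
    ext T'
    simp only [mem_filter, mem_singleton]
    exact ⟨fun h => h𝒯.elim_finset h.1 hT j h.2 hj, fun h => h ▸ ⟨hT, hj⟩⟩
  simp only [anchor, hfilter, singleton_biUnion, id, insert_eq_of_mem hj]

theorem eq_of_min'_eq {T T' : Finset (Fin n)} (hT : T ∈ 𝒯) (hT' : T' ∈ 𝒯) (hne : T.Nonempty)
    (hne' : T'.Nonempty) (h : T.min' hne = T'.min' hne') : T = T' :=
  h𝒯.elim_finset hT hT' _ (min'_mem T hne) (h ▸ min'_mem T' hne')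

theorem anchor_eq_min'_iff {T : Finset (Fin n)} (hT : T ∈ 𝒯) (hne : T.Nonempty) (j : Fin n) :
    anchor 𝒯 j = T.min' hne ↔ j ∈ T := by
  refine ⟨fun h => ?_, fun hj => anchor_eq h𝒯 hT hj⟩
  by_cases hj : ∃ T' ∈ 𝒯, j ∈ T'
  · obtain ⟨T', hT', hjT'⟩ := hj
    rw [anchor_eq h𝒯 hT' hjT'] at h
    exact eq_of_min'_eq h𝒯 hT' hT _ hne h ▸ hjT'
  · push Not at hj
    rw [anchor_eq_self hj] at h
    exact h ▸ min'_mem T hne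

theorem rowGate_injOn : Set.InjOn rowGate (𝒯 : Set (Finset (Fin n))) := by
  have key : ∀ {T T'}, T ∈ 𝒯 → T' ∈ 𝒯 → rowGate T = rowGate T' → T.Nonempty → T = T' := by
    intro T T' hT hT' h hne
    have hmem : ((T.min' hne).succ, T.min' hne) ∈ rowGate T' := h ▸ by simp [rowGate, hne]
    unfold rowGate at hmem
    split_ifs at hmem with hne'
    · simp only [mem_product, mem_singleton, Fin.succ_inj, mem_univ, and_true] at hmem
      exact eq_of_min'_eq h𝒯 hT hT' hne hne' hmem
    · simp at hmem
  intro T hT T' hT' h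
  by_cases hne : T.Nonempty
  · exact key hT hT' h hne
  by_cases hne' : T'.Nonempty
  · exact (key hT' hT h.symm hne').symm
  rw [not_nonempty_iff_eq_empty.1 hne, not_nonempty_iff_eq_empty.1 hne']

theorem isCZLayer_rowGates [NeZero n] :
    IsCZLayer (IsRowColInterval (n + 1) n) (diagonal (czPhase (𝒯.image rowGate))) := by
  refine isCZLayer_iff.2 ⟨_, fun _ hG => ?_, ?_, rfl⟩
  · obtain ⟨T, -, rfl⟩ := mem_image.1 hG
    exact isRowColInterval_rowGate T
  rw [coe_image]
  rintro _ ⟨T, hT, rfl⟩ _ ⟨T', hT', rfl⟩ hne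
  have hTT' : T ≠ T' := fun h => hne (h ▸ rfl)
  unfold rowGate
  split_ifs with h h'
  · refine disjoint_product.2 (Or.inl (disjoint_singleton.2 fun hrow => hTT' ?_))
    exact eq_of_min'_eq h𝒯 hT hT' h h' (Fin.succ_injective _ hrow)
  all_goals simp [Function.onFun]

theorem forall_mem_rowGate_iff {T : Finset (Fin n)} (hT : T ∈ 𝒯) {z : Fin (n + 1) × Fin n → Bool}
    (hz : ∀ j, copyState (anchor 𝒯 j).succ (fun i => z (i, j)) ≠ 0) :
    (∀ p ∈ rowGate T, z p = true) ↔ ∀ j ∈ T, z (0, j) = true := by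
  unfold rowGate
  split_ifs with hne
  · simp only [mem_product, mem_singleton, mem_univ, and_true, Prod.forall]
    rw [forall_comm]
    simp only [forall_eq]
    refine forall_congr' fun j => ?_
    obtain ⟨hspect, hcopy⟩ := of_copyState_ne_zero (hz j)
    by_cases hj : j ∈ T
    · rw [anchor_eq h𝒯 hT hj] at hcopy
      simp only [hcopy, hj, true_implies]
    · have hrow : (T.min' hne).succ ≠ (anchor 𝒯 j).succ := fun h =>
        hj ((anchor_eq_min'_iff h𝒯 hT hne j).1 (Fin.succ_injective _ h).symm)
      simp only [hspect _ (Fin.succ_ne_zero _) hrow, hj, false_implies]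
  · simp [not_nonempty_iff_eq_empty.1 hne]

theorem diagonal_czPhase_rowGates_mulVec_colState (ψ : (Fin n → Bool) → ℂ) :
    diagonal (czPhase (𝒯.image rowGate)) *ᵥ colState ψ (fun j => copyState (anchor 𝒯 j).succ) =
      colState (diagonal (czPhase 𝒯) *ᵥ ψ) (fun j => copyState (anchor 𝒯 j).succ) := by
  funext z
  simp only [mulVec_diagonal, colState]
  by_cases hz : ∀ j, copyState (anchor 𝒯 j).succ (fun i => z (i, j)) ≠ 0
  · have hphase : czPhase (𝒯.image rowGate) z = czPhase 𝒯 (fun j => z (0, j)) := by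
      rw [czPhase, prod_image (rowGate_injOn h𝒯)]
      exact prod_congr rfl fun T hT => by simp only [forall_mem_rowGate_iff h𝒯 hT hz]; congr
    rw [hphase, mul_assoc]
  · push Not at hz
    obtain ⟨j, hj⟩ := hz
    rw [prod_eq_zero (f := fun j => copyState (anchor 𝒯 j).succ fun i => z (i, j)) (mem_univ j) hj]
    simp only [mul_zero]

end Gadget

section Simulation

variable {n : ℕ}

noncomputable def anchorLayer (𝒯 : Finset (Finset (Fin n))) (A : Matrix Bool Bool ℂ) :
    Matrix (Fin (n + 1) × Fin n → Bool) (Fin (n + 1) × Fin n → Bool) ℂ :=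
  colKron fun j => piKron (Pi.mulSingle (anchor 𝒯 j).succ A)

noncomputable def layerGadget (𝒯 : Finset (Finset (Fin n))) (u : Fin n → Matrix Bool Bool ℂ) :
    Matrix (Fin (n + 1) × Fin n → Bool) (Fin (n + 1) × Fin n → Bool) ℂ :=
  topLayer u * anchorLayer 𝒯 pauliX * anchorLayer 𝒯 hadamardGate *
    diagonal (czPhase (univ.image (colGate 𝒯))) *
    (anchorLayer 𝒯 hadamardGate * diagonal (czPhase (𝒯.image rowGate)) *
      (anchorLayer 𝒯 hadamardGate * diagonal (czPhase (univ.image (colGate 𝒯))) *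
        (anchorLayer 𝒯 hadamardGate * anchorLayer 𝒯 pauliX)))

variable {𝒯 : Finset (Finset (Fin n))} (h𝒯 : (𝒯 : Set (Finset (Fin n))).PairwiseDisjoint id)
include h𝒯

theorem is2DQAC_layerGadget [NeZero n] {u : Fin n → Matrix Bool Bool ℂ}
    (hu : ∀ j, u j ∈ unitaryGroup Bool ℂ) : Is2DQAC (n + 1) n 3 (layerGadget 𝒯 u) := by
  have hX := isSingleQubitLayer_colKron_mulSingle (fun j => (anchor 𝒯 j).succ)
    fun _ => pauliX_mem_unitaryGroup
  have hH := isSingleQubitLayer_colKron_mulSingle (fun j => (anchor 𝒯 j).succ)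
    fun _ => hadamardGate_mem_unitaryGroup
  have hTop := isSingleQubitLayer_colKron_mulSingle (fun _ => (0 : Fin (n + 1))) hu
  exact ⟨_, _, _, (hTop.mul hX).mul hH, isCZLayer_colGates 𝒯,
    ⟨_, _, _, hH, isCZLayer_rowGates h𝒯, ⟨_, _, _, hH, isCZLayer_colGates 𝒯, hH.mul hX, rfl⟩, rfl⟩,
    rfl⟩

theorem layerGadget_mulVec_colState (u : Fin n → Matrix Bool Bool ℂ) (ψ : (Fin n → Bool) → ℂ) :
    layerGadget 𝒯 u *ᵥ colState ψ (fun _ => ancillaOnes) =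
      colState ((piKron u * diagonal (czPhase 𝒯)) *ᵥ ψ) (fun _ => ancillaOnes) := by
  have hcopy : anchorLayer 𝒯 hadamardGate * diagonal (czPhase (univ.image (colGate 𝒯))) *
      anchorLayer 𝒯 hadamardGate * anchorLayer 𝒯 pauliX =
      colKron fun j => copyGate (anchor 𝒯 j).succ := by
    simp only [anchorLayer, diagonal_czPhase_colGates, colKron_mul]
    rfl
  have huncopy : anchorLayer 𝒯 pauliX * anchorLayer 𝒯 hadamardGate *
      diagonal (czPhase (univ.image (colGate 𝒯))) * anchorLayer 𝒯 hadamardGate =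
      colKron fun j => uncopyGate (anchor 𝒯 j).succ := by
    simp only [anchorLayer, diagonal_czPhase_colGates, colKron_mul]
    rfl
  have hgadget : layerGadget 𝒯 u = topLayer u * colKron (fun j => uncopyGate (anchor 𝒯 j).succ) *
      diagonal (czPhase (𝒯.image rowGate)) * colKron (fun j => copyGate (anchor 𝒯 j).succ) := by
    rw [← hcopy, ← huncopy]
    simp only [layerGadget, Matrix.mul_assoc]
  rw [hgadget, ← mulVec_mulVec, ← mulVec_mulVec, ← mulVec_mulVec,
    colKron_mulVec_colState fun j => preservesTop_copyGate (Fin.succ_ne_zero _)]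
  simp only [copyGate_mulVec_ancillaOnes (Fin.succ_ne_zero _)]
  rw [diagonal_czPhase_rowGates_mulVec_colState h𝒯,
    colKron_mulVec_colState fun j => preservesTop_uncopyGate (Fin.succ_ne_zero _)]
  simp only [uncopyGate_mulVec_copyState (Fin.succ_ne_zero _)]
  rw [topLayer, colKron_mulSingle_zero_mulVec_colState u _ fun _ => ancillaOnes_update_zero,
    mulVec_mulVec]

end Simulation

theorem exists_is2DQAC_mulVec_colState {n : ℕ} [NeZero n] {d : ℕ}
    {U : Matrix (Fin n → Bool) (Fin n → Bool) ℂ} (hU : IsQAC d U) :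
    ∃ V, Is2DQAC (n + 1) n (3 * d) V ∧ ∀ φ : (Fin n → Bool) → ℂ,
      V *ᵥ colState φ (fun _ => ancillaOnes) = colState (U *ᵥ φ) (fun _ => ancillaOnes) := by
  induction d generalizing U with
  | zero =>
    obtain ⟨u, hu, rfl⟩ := isSingleQubitLayer_iff.1 hU
    exact ⟨topLayer u, isSingleQubitLayer_colKron_mulSingle _ hu, fun φ =>
      colKron_mulSingle_zero_mulVec_colState u φ fun _ => ancillaOnes_update_zero⟩
  | succ d ih =>
    obtain ⟨L, M, C, hL, hM, hC, rfl⟩ := hU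
    obtain ⟨u, hu, rfl⟩ := isSingleQubitLayer_iff.1 hL
    obtain ⟨𝒯, -, h𝒯, rfl⟩ := isCZLayer_iff.1 hM
    obtain ⟨V, hV, hVφ⟩ := ih hC
    refine ⟨layerGadget 𝒯 u * V, ?_, fun φ => ?_⟩
    · rw [show 3 * (d + 1) = 3 + 3 * d by ring]
      exact IsQACOn.mul (is2DQAC_layerGadget h𝒯 hu) hV
    · rw [← mulVec_mulVec, hVφ, layerGadget_mulVec_colState h𝒯, mulVec_mulVec]

/-- **2D-QAC circuits exactly simulate general QAC circuits.**
Any unitary `U` implemented by a depth-`d` QAC circuit on `n` qubits is exactly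
simulated by a depth-`7d` 2D-QAC circuit `V` on the `(n+1) × n` lattice, whose
first row holds the `n` input qubits and whose remaining `n²` qubits are
ancillas initialized (and restored) to `|1^{n²}⟩`:
`V(|φ⟩ ⊗ |1^{n²}⟩) = (U|φ⟩) ⊗ |1^{n²}⟩` for every `n`-qubit state `|φ⟩`. -/
theorem stmt4 (n d : ℕ) (hn : 1 ≤ n)
    (U : Matrix (Fin n → Bool) (Fin n → Bool) ℂ) (hU : IsQAC d U) :
    ∃ V : Matrix (Fin (n + 1) × Fin n → Bool) (Fin (n + 1) × Fin n → Bool) ℂ,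
      Is2DQAC (n + 1) n (7 * d) V ∧
      ∀ φ : (Fin n → Bool) → ℂ,
        V.mulVec (fun z =>
            if ∀ p : Fin (n + 1) × Fin n, p.1 ≠ 0 → z p = true then
              φ (fun j => z (0, j))
            else 0) =
          fun z =>
            if ∀ p : Fin (n + 1) × Fin n, p.1 ≠ 0 → z p = true then
              U.mulVec φ (fun j => z (0, j))
            else 0 := by
  have : NeZero n := ⟨by omega⟩
  obtain ⟨V, hV, hVφ⟩ := exists_is2DQAC_mulVec_colState hU
  refine ⟨V, IsQACOn.mono hV (by omega), fun φ => ?_⟩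
  simpa only [colState_ancillaOnes] using hVφ φ
end

section
/- Let n ≥ 3 be an odd integer, let Maj_n : {−1,1}^n → {−1,1} be the majority function (Maj_n(x) = 1 if Σ_i x_i > 0 and −1 otherwise), and let S ⊆ [n] be such that |S| ≥ 3 and |S^c| is even. Then E_z[ √(W^{≤1}[Maj_n|_{S^c,z}]) ] ≤ 1 − 0.09/√n, where z is uniform on {−1,1}^{S^c}. -/
/-!
Every restriction `g` of majority is `±1`-valued, so Parseval gives `W^{≤1}[g] + W^{>1}[g] = 1`
and hence `√(W^{≤1}[g]) ≤ 1 - W^{>1}[g]/2`. With probability `C(2ℓ,ℓ)/4^ℓ` (where `|Sᶜ| = 2ℓ`)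
the fixed coordinates are balanced, and then the restriction is majority on the `2r+1 ≥ 3`
coordinates of `S`, whose level-1 weight is `(2r+1)·(C(2r,r)/4^r)² ≤ 3/4`. So the average is at
most `1 - C(2ℓ,ℓ)/(8·4^ℓ)`, and the Wallis-type bound `(C(2ℓ,ℓ)/4^ℓ)² ≥ 5/(16ℓ+4)` together
with `2ℓ + 3 ≤ n` gives `C(2ℓ,ℓ)/4^ℓ ≥ 0.72/√n`.
-/

/-- The `±1` value encoded by a Boolean: `true ↦ 1`, `false ↦ -1`. -/
def pmOfBool (b : Bool) : ℝ := if b then 1 else -1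

/-- The Fourier character `χ_T(x) = ∏_{i ∈ T} x_i` on the Boolean cube
(points of `{−1,1}^ι` encoded as `ι → Bool`). -/
def chi {ι : Type*} (T : Finset ι) (x : ι → Bool) : ℝ := ∏ i ∈ T, pmOfBool (x i)

/-- The Fourier coefficient `f̂(T) = E_x[f(x)·χ_T(x)]`. -/
noncomputable def fCoeff {ι : Type*} [Fintype ι] [DecidableEq ι]
    (f : (ι → Bool) → ℝ) (T : Finset ι) : ℝ :=
  (∑ x, f x * chi T x) / (Fintype.card (ι → Bool) : ℝ)

/-- The Fourier weight of `f` at levels `≤ k`: `W^{≤k}[f] = Σ_{|T| ≤ k} f̂(T)²`. -/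
noncomputable def weightLE {ι : Type*} [Fintype ι] [DecidableEq ι]
    (k : ℕ) (f : (ι → Bool) → ℝ) : ℝ :=
  ∑ T ∈ Finset.univ.filter (fun T : Finset ι => T.card ≤ k), (fCoeff f T) ^ 2

/-- The Fourier weight of `f` at levels `> k`: `W^{>k}[f] = Σ_{|T| > k} f̂(T)²`. -/
noncomputable def weightGT {ι : Type*} [Fintype ι] [DecidableEq ι]
    (k : ℕ) (f : (ι → Bool) → ℝ) : ℝ :=
  ∑ T ∈ Finset.univ.filter (fun T : Finset ι => k < T.card), (fCoeff f T) ^ 2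

/-- The (normalized) 2-norm `‖f‖₂ = (E_x[f(x)²])^{1/2}`. -/
noncomputable def l2norm {ι : Type*} [Fintype ι] [DecidableEq ι]
    (f : (ι → Bool) → ℝ) : ℝ :=
  Real.sqrt ((∑ x, (f x) ^ 2) / (Fintype.card (ι → Bool) : ℝ))

/-- The restriction `f|_{S,z}` of `f` obtained by fixing the coordinates in `S`
to the assignment `z`, viewed as a function of the remaining coordinates. -/
def restrictTo {ι : Type*} [Fintype ι] [DecidableEq ι] (f : (ι → Bool) → ℝ)
    (S : Finset ι) (z : {i // i ∈ S} → Bool) : ({i // i ∉ S} → Bool) → ℝ :=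
  fun y => f fun i => if h : i ∈ S then z ⟨i, h⟩ else y ⟨i, h⟩

/-- The majority function on `{−1,1}^n` (points encoded as `ι → Bool`):
`Maj(x) = 1` if `Σᵢ xᵢ > 0` and `−1` otherwise. -/
noncomputable def majFun {ι : Type*} [Fintype ι] : (ι → Bool) → ℝ :=
  fun x => if 0 < ∑ i, pmOfBool (x i) then 1 else -1

open Finset

lemma centralBinom_succ_div_four_pow (r : ℕ) :
    (Nat.centralBinom (r + 1) : ℝ) / 4 ^ (r + 1)
      = Nat.centralBinom r / 4 ^ r * ((2 * r + 1) / (2 * (r + 1))) := by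
  have h : ((r + 1 : ℕ) : ℝ) * Nat.centralBinom (r + 1) = 2 * (2 * r + 1) * Nat.centralBinom r := by
    exact_mod_cast Nat.succ_mul_centralBinom_succ r
  push_cast at h
  field_simp
  rw [pow_succ]
  linear_combination 4 ^ r * 2 * h

lemma three_mul_add_one_mul_sq_centralBinom_div_four_pow_le_one (r : ℕ) :
    (3 * r + 1) * ((Nat.centralBinom r : ℝ) / 4 ^ r) ^ 2 ≤ 1 := by
  induction r with
  | zero => simp
  | succ r ih =>
    rw [centralBinom_succ_div_four_pow, mul_pow]
    have hr : (0 : ℝ) ≤ r := r.cast_nonneg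
    have key : ((3 * (r + 1 : ℕ) + 1 : ℝ)) * ((2 * r + 1) / (2 * (r + 1))) ^ 2 ≤ 3 * r + 1 := by
      rw [div_pow, ← mul_div_assoc, div_le_iff₀ (by positivity)]
      push_cast; nlinarith
    calc _ = ((3 * (r + 1 : ℕ) + 1 : ℝ)) * ((2 * r + 1) / (2 * (r + 1))) ^ 2
          * ((Nat.centralBinom r : ℝ) / 4 ^ r) ^ 2 := by ring
      _ ≤ (3 * r + 1) * ((Nat.centralBinom r : ℝ) / 4 ^ r) ^ 2 := by gcongr
      _ ≤ 1 := ih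

lemma five_le_mul_sq_centralBinom_div_four_pow (r : ℕ) (hr : 1 ≤ r) :
    5 ≤ (16 * r + 4) * ((Nat.centralBinom r : ℝ) / 4 ^ r) ^ 2 := by
  induction r, hr using Nat.le_induction with
  | base => norm_num [Nat.centralBinom, Nat.choose]
  | succ r _ ih =>
    rw [centralBinom_succ_div_four_pow, mul_pow]
    have hr : (0 : ℝ) ≤ r := r.cast_nonneg
    have key : (16 * r + 4 : ℝ) ≤ (16 * (r + 1 : ℕ) + 4) * ((2 * r + 1) / (2 * (r + 1))) ^ 2 := by
      rw [div_pow, ← mul_div_assoc, le_div_iff₀ (by positivity)]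
      push_cast; nlinarith
    calc (5 : ℝ) ≤ (16 * r + 4) * ((Nat.centralBinom r : ℝ) / 4 ^ r) ^ 2 := ih
      _ ≤ (16 * (r + 1 : ℕ) + 4) * ((2 * r + 1) / (2 * (r + 1))) ^ 2
          * ((Nat.centralBinom r : ℝ) / 4 ^ r) ^ 2 := by gcongr
      _ = _ := by ring

lemma pmOfBool_mul_self (b : Bool) : pmOfBool b * pmOfBool b = 1 := by
  cases b <;> simp [pmOfBool]

section Fourier

variable {ι : Type*} [Fintype ι] [DecidableEq ι]

lemma sum_chi_mul_chi (x y : ι → Bool) :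
    ∑ T : Finset ι, chi T x * chi T y = if x = y then (Fintype.card (ι → Bool) : ℝ) else 0 := by
  have hprod : ∑ T : Finset ι, chi T x * chi T y
      = ∏ i, (pmOfBool (x i) * pmOfBool (y i) + 1) := by
    simp only [Fintype.prod_add, prod_const_one, mul_one, chi, ← prod_mul_distrib]
  rw [hprod]
  split_ifs with hxy
  · subst hxy
    norm_num [pmOfBool_mul_self, Fintype.card_fun]
  · obtain ⟨i, hi⟩ := Function.ne_iff.mp hxy
    apply prod_eq_zero (mem_univ i)
    cases hx : x i <;> cases hy : y i <;> simp_all [pmOfBool]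

lemma sum_fCoeff_sq (f : (ι → Bool) → ℝ) :
    ∑ T : Finset ι, fCoeff f T ^ 2 = (∑ x, f x ^ 2) / Fintype.card (ι → Bool) := by
  have key : ∑ T : Finset ι, (∑ x, f x * chi T x) ^ 2
      = Fintype.card (ι → Bool) * ∑ x, f x ^ 2 := by
    calc _ = ∑ T : Finset ι, ∑ x, ∑ y, f x * f y * (chi T x * chi T y) := by
          refine sum_congr rfl fun T _ => ?_
          rw [sq, sum_mul_sum]
          exact sum_congr rfl fun x _ => sum_congr rfl fun y _ => by ring
      _ = ∑ x, ∑ y, f x * f y * ∑ T : Finset ι, chi T x * chi T y := by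
          simp only [mul_sum]
          rw [sum_comm]
          exact sum_congr rfl fun x _ => sum_comm
      _ = _ := by simp [sum_chi_mul_chi, mul_sum, sq, mul_comm]
  simp only [fCoeff, div_pow, ← sum_div, key]
  field_simp

lemma weightLE_add_weightGT (k : ℕ) (f : (ι → Bool) → ℝ) :
    weightLE k f + weightGT k f = (∑ x, f x ^ 2) / Fintype.card (ι → Bool) := by
  simp only [weightLE, weightGT, ← not_le, ← sum_fCoeff_sq]
  exact sum_filter_add_sum_filter_not _ _ _

lemma weightLE_nonneg (k : ℕ) (f : (ι → Bool) → ℝ) : 0 ≤ weightLE k f :=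
  sum_nonneg fun _ _ => sq_nonneg _

lemma weightGT_nonneg (k : ℕ) (f : (ι → Bool) → ℝ) : 0 ≤ weightGT k f :=
  sum_nonneg fun _ _ => sq_nonneg _

lemma weightLE_add_weightGT_of_sq_eq_one {f : (ι → Bool) → ℝ} (hf : ∀ x, f x ^ 2 = 1) (k : ℕ) :
    weightLE k f + weightGT k f = 1 := by
  simp [weightLE_add_weightGT, hf]

lemma sqrt_weightLE_le_of_sq_eq_one {f : (ι → Bool) → ℝ} (hf : ∀ x, f x ^ 2 = 1) (k : ℕ) :
    √(weightLE k f) ≤ 1 - weightGT k f / 2 := by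
  have hsum := weightLE_add_weightGT_of_sq_eq_one hf k
  have hLE := weightLE_nonneg k f
  rw [Real.sqrt_le_iff]
  constructor <;> nlinarith [sq_nonneg (weightGT k f)]

lemma weightLE_one_eq (f : (ι → Bool) → ℝ) :
    weightLE 1 f = fCoeff f ∅ ^ 2 + ∑ i, fCoeff f {i} ^ 2 := by
  have hlevels : univ.filter (fun T : Finset ι => T.card ≤ 1)
      = insert ∅ (univ.map ⟨fun i => {i}, singleton_injective⟩) := by
    ext T
    simp [Nat.le_one_iff_eq_zero_or_eq_one, card_eq_one, eq_comm]
  rw [weightLE, hlevels, sum_insert (by simp), sum_map]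
  rfl

end Fourier

section Majority

variable {ι : Type*} [Fintype ι]

lemma sum_pmOfBool (x : ι → Bool) :
    ∑ i, pmOfBool (x i) = 2 * #{i | x i = true} - Fintype.card ι := by
  have h : ∀ b : Bool, pmOfBool b = 2 * (if b = true then 1 else 0) - 1 := by
    intro b; cases b <;> norm_num [pmOfBool]
  simp only [h, sum_sub_distrib, ← mul_sum, sum_boole, sum_const, card_univ]
  simp

lemma sum_pmOfBool_ne_zero (hodd : Odd (Fintype.card ι)) (x : ι → Bool) :
    ∑ i, pmOfBool (x i) ≠ 0 := by
  rw [sum_pmOfBool, sub_ne_zero]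
  intro h
  obtain ⟨k, hk⟩ := hodd
  have : 2 * #{i | x i = true} = Fintype.card ι := by exact_mod_cast h
  omega

lemma majFun_sq (x : ι → Bool) : majFun x ^ 2 = 1 := by
  unfold majFun; split <;> norm_num

lemma majFun_not (hodd : Odd (Fintype.card ι)) (x : ι → Bool) :
    majFun (fun i => !x i) = -majFun x := by
  have hneg : ∑ i, pmOfBool (!x i) = -∑ i, pmOfBool (x i) := by
    rw [← sum_neg_distrib]
    exact sum_congr rfl fun i _ => by cases x i <;> simp [pmOfBool]
  have hne := sum_pmOfBool_ne_zero hodd x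
  unfold majFun
  rw [hneg]
  rcases hne.lt_or_gt with h | h
  · rw [if_pos (by linarith), if_neg (by linarith), neg_neg]
  · rw [if_neg (by linarith), if_pos h]

lemma sum_majFun_eq_zero [DecidableEq ι] (hodd : Odd (Fintype.card ι)) :
    ∑ x : ι → Bool, majFun x = 0 := by
  have hinv : Function.Involutive fun (x : ι → Bool) i => !x i := fun x => by simp
  have h := Equiv.sum_comp hinv.toPerm majFun
  simp only [Function.Involutive.coe_toPerm, majFun_not hodd, sum_neg_distrib] at h
  linarith

end Majority

section Pivotal

variable {ι : Type*} [Fintype ι] [DecidableEq ι]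

lemma card_filter_card_filter_eq_true (k : ℕ) :
    #{y : ι → Bool | #{i | y i = true} = k} = (Fintype.card ι).choose k := by
  rw [← card_univ, ← card_powersetCard]
  refine card_bij' (fun y _ => ({i | y i = true} : Finset ι)) (fun T _ i => decide (i ∈ T))
    ?_ ?_ ?_ ?_
  all_goals intros; simp_all [mem_powersetCard]

lemma sum_pmOfBool_funSplitAt_symm (i : ι) (b : Bool) (y : {j // j ≠ i} → Bool) :
    ∑ j, pmOfBool ((Equiv.funSplitAt i Bool).symm (b, y) j) = pmOfBool b + ∑ j, pmOfBool (y j) := by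
  rw [Fintype.sum_eq_add_sum_subtype_ne _ i]
  congr 1
  · simp
  · exact sum_congr rfl fun j _ => by simp [j.2]

/-- The `i`-th coordinate is pivotal for majority exactly when the others are balanced. -/
lemma sum_majFun_funSplitAt_symm_mul {r : ℕ} (hcard : Fintype.card ι = 2 * r + 1) (i : ι)
    (y : {j // j ≠ i} → Bool) :
    ∑ b, majFun ((Equiv.funSplitAt i Bool).symm (b, y)) * pmOfBool b
      = if #{j | y j = true} = r then 2 else 0 := by
  have hrest : Fintype.card {j // j ≠ i} = 2 * r := by simp [Fintype.card_subtype_compl, hcard]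
  have hsum (b : Bool) : ∑ j, pmOfBool ((Equiv.funSplitAt i Bool).symm (b, y) j)
      = pmOfBool b + 2 * (#{j | y j = true} - r : ℝ) := by
    rw [sum_pmOfBool_funSplitAt_symm, sum_pmOfBool, hrest]; push_cast; ring
  simp only [majFun, hsum, Fintype.sum_bool]
  simp only [pmOfBool, if_true, Bool.false_eq_true, if_false]
  rcases lt_trichotomy #{j | y j = true} r with h | h | h
  · have : (#{j | y j = true} : ℝ) + 1 ≤ r := by exact_mod_cast h
    rw [if_neg h.ne, if_neg (by linarith), if_neg (by linarith)]; norm_num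
  · rw [h, if_pos rfl, if_pos (by norm_num), if_neg (by norm_num)]; norm_num
  · have : (r : ℝ) + 1 ≤ #{j | y j = true} := by exact_mod_cast h
    rw [if_neg h.ne', if_pos (by linarith), if_pos (by linarith)]; norm_num

lemma sum_majFun_mul_pmOfBool {r : ℕ} (hcard : Fintype.card ι = 2 * r + 1) (i : ι) :
    ∑ x : ι → Bool, majFun x * pmOfBool (x i) = 2 * Nat.centralBinom r := by
  have hrest : Fintype.card {j // j ≠ i} = 2 * r := by simp [Fintype.card_subtype_compl, hcard]
  rw [← (Equiv.funSplitAt i Bool).symm.sum_comp, Fintype.sum_prod_type, sum_comm]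
  have hself (b : Bool) (y : {j // j ≠ i} → Bool) :
      (Equiv.funSplitAt i Bool).symm (b, y) i = b := by
    simp
  simp only [hself, sum_majFun_funSplitAt_symm_mul hcard, ← sum_filter, sum_const,
    card_filter_card_filter_eq_true, hrest, Nat.centralBinom_eq_two_mul_choose, nsmul_eq_mul]
  ring

end Pivotal

section MajorityWeight

variable {ι : Type*} [Fintype ι] [DecidableEq ι]

lemma card_fun_bool_eq_two_mul_four_pow {r : ℕ} (hcard : Fintype.card ι = 2 * r + 1) :
    (Fintype.card (ι → Bool) : ℝ) = 2 * 4 ^ r := by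
  rw [Fintype.card_fun, Fintype.card_bool, hcard, pow_succ, pow_mul]
  push_cast; ring

lemma fCoeff_majFun_empty (hodd : Odd (Fintype.card ι)) : fCoeff majFun (∅ : Finset ι) = 0 := by
  simp [fCoeff, chi, sum_majFun_eq_zero hodd]

lemma fCoeff_majFun_singleton {r : ℕ} (hcard : Fintype.card ι = 2 * r + 1) (i : ι) :
    fCoeff majFun {i} = Nat.centralBinom r / 4 ^ r := by
  rw [fCoeff, card_fun_bool_eq_two_mul_four_pow hcard]
  simp only [chi, prod_singleton, sum_majFun_mul_pmOfBool hcard]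
  field_simp

lemma weightLE_one_majFun {r : ℕ} (hcard : Fintype.card ι = 2 * r + 1) :
    weightLE 1 (majFun (ι := ι)) = (2 * r + 1) * (Nat.centralBinom r / 4 ^ r) ^ 2 := by
  have hodd : Odd (Fintype.card ι) := hcard ▸ odd_two_mul_add_one r
  simp [weightLE_one_eq, fCoeff_majFun_empty hodd, fCoeff_majFun_singleton hcard, hcard]

lemma quarter_le_weightGT_one_majFun {r : ℕ} (hr : 1 ≤ r) (hcard : Fintype.card ι = 2 * r + 1) :
    1 / 4 ≤ weightGT 1 (majFun (ι := ι)) := by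
  have hsum := weightLE_add_weightGT_of_sq_eq_one majFun_sq 1 (ι := ι)
  have hbound := three_mul_add_one_mul_sq_centralBinom_div_four_pow_le_one r
  have hr' : (1 : ℝ) ≤ r := by exact_mod_cast hr
  rw [weightLE_one_majFun hcard] at hsum
  nlinarith [sq_nonneg ((Nat.centralBinom r : ℝ) / 4 ^ r)]

end MajorityWeight

lemma restrictTo_majFun_of_sum_eq_zero {ι : Type*} [Fintype ι] [DecidableEq ι] (U : Finset ι)
    (z : {i // i ∈ U} → Bool) (hz : ∑ i, pmOfBool (z i) = 0) :
    restrictTo majFun U z = majFun := by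
  funext y
  simp only [restrictTo, majFun]
  have hin (i : {i // i ∈ U}) : (if h : (i : ι) ∈ U then z ⟨i, h⟩ else y ⟨i, h⟩) = z i :=
    dif_pos i.2
  have hout (i : {i // i ∉ U}) : (if h : (i : ι) ∈ U then z ⟨i, h⟩ else y ⟨i, h⟩) = y i :=
    dif_neg i.2
  rw [← Fintype.sum_subtype_add_sum_subtype (· ∈ U)]
  simp only [hin, hout]
  -- the sum over `U` here carries a different `Fintype` instance than the one in `hz`
  congr 2
  convert zero_add _
  convert hz

lemma sum_sqrt_weightLE_one_restrictTo_majFun_div_le {ι : Type*} [Fintype ι] [DecidableEq ι]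
    (U : Finset ι) {ℓ r : ℕ} (hU : U.card = 2 * ℓ) (hUc : Uᶜ.card = 2 * r + 1) (hr : 1 ≤ r) :
    (∑ z : {i // i ∈ U} → Bool, √(weightLE 1 (restrictTo majFun U z))) /
        Fintype.card ({i // i ∈ U} → Bool) ≤ 1 - Nat.centralBinom ℓ / 4 ^ ℓ / 8 := by
  have hcardU : Fintype.card {i // i ∈ U} = 2 * ℓ := by simpa using hU
  have hcardUc : Fintype.card {i // i ∉ U} = 2 * r + 1 := by
    rw [Fintype.card_subtype_compl, Fintype.card_coe, ← hUc, card_compl]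
  have hN : (Fintype.card ({i // i ∈ U} → Bool) : ℝ) = 4 ^ ℓ := by
    rw [Fintype.card_fun, Fintype.card_bool, hcardU, pow_mul]; norm_num
  set B := ({z | #{i | z i = true} = ℓ} : Finset ({i // i ∈ U} → Bool))
  have hB : (#B : ℝ) = Nat.centralBinom ℓ := by
    rw [card_filter_card_filter_eq_true, hcardU, Nat.centralBinom_eq_two_mul_choose]
  have hbalanced : ∀ z ∈ B, 1 / 4 ≤ weightGT 1 (restrictTo majFun U z) := by
    intro z hz
    rw [restrictTo_majFun_of_sum_eq_zero U z]
    · exact quarter_le_weightGT_one_majFun hr hcardUc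
    · rw [sum_pmOfBool, (mem_filter.1 hz).2, hcardU]; push_cast; ring
  have hsumGT : (Nat.centralBinom ℓ : ℝ) / 4 ≤ ∑ z, weightGT 1 (restrictTo majFun U z) :=
    calc (Nat.centralBinom ℓ : ℝ) / 4 = ∑ _z ∈ B, (1 / 4 : ℝ) := by simp [hB, div_eq_mul_inv]
      _ ≤ ∑ z ∈ B, weightGT 1 (restrictTo majFun U z) := sum_le_sum hbalanced
      _ ≤ _ := sum_le_sum_of_subset_of_nonneg (subset_univ B) fun _ _ _ => weightGT_nonneg _ _
  have hsum : ∑ z, √(weightLE 1 (restrictTo majFun U z))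
      ≤ ∑ z, (1 - weightGT 1 (restrictTo majFun U z) / 2) :=
    sum_le_sum fun z _ => sqrt_weightLE_le_of_sq_eq_one (fun _ => majFun_sq _) 1
  rw [sum_sub_distrib, ← sum_div, sum_const, card_univ, nsmul_one, hN] at hsum
  rw [hN, div_le_iff₀ (by positivity)]
  field_simp
  linarith

lemma div_sqrt_le_centralBinom_div_four_pow {ℓ n : ℕ} (h : 2 * ℓ + 3 ≤ n) :
    0.72 / √n ≤ Nat.centralBinom ℓ / 4 ^ ℓ := by
  have hn : (2 * ℓ + 3 : ℝ) ≤ n := by exact_mod_cast h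
  have hsqrt : 0 < √(n : ℝ) := Real.sqrt_pos.2 (by linarith)
  rcases Nat.eq_zero_or_pos ℓ with rfl | hℓ
  · rw [Nat.centralBinom_zero, div_le_iff₀ hsqrt]
    nlinarith [Real.sq_sqrt (n.cast_nonneg : (0 : ℝ) ≤ n)]
  · have hbound := five_le_mul_sq_centralBinom_div_four_pow ℓ hℓ
    refine (pow_le_pow_iff_left₀ (by positivity) (by positivity) two_ne_zero).1 ?_
    rw [div_pow, Real.sq_sqrt n.cast_nonneg, div_le_iff₀ (by linarith)]
    nlinarith

theorem stmt15_general (n : ℕ) (hodd : Odd n) (S : Finset (Fin n))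
    (hS : 3 ≤ S.card) (hSc : Even Sᶜ.card) :
    (∑ z : {i // i ∈ Sᶜ} → Bool,
        Real.sqrt (weightLE 1 (restrictTo (majFun (ι := Fin n)) Sᶜ z))) /
      (Fintype.card ({i // i ∈ Sᶜ} → Bool) : ℝ) ≤ 1 - 0.09 / Real.sqrt n := by
  obtain ⟨ℓ, hℓ⟩ := hSc
  have hn : S.card + Sᶜ.card = n := S.card_add_card_compl.trans (Fintype.card_fin n)
  obtain ⟨r, hr⟩ : ∃ r, S.card = 2 * r + 1 := by
    obtain ⟨k, hk⟩ := hodd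
    exact ⟨(S.card - 1) / 2, by omega⟩
  have hcentral := div_sqrt_le_centralBinom_div_four_pow (ℓ := ℓ) (n := n) (by omega)
  calc _ ≤ 1 - (Nat.centralBinom ℓ : ℝ) / 4 ^ ℓ / 8 :=
        sum_sqrt_weightLE_one_restrictTo_majFun_div_le Sᶜ (by omega) (by rwa [compl_compl])
          (by omega)
    _ ≤ 1 - 0.09 / √n := by linarith [show (0.09 : ℝ) / √n = 0.72 / √n / 8 by ring]

/-- **Average restricted level-≤1 weight of majority.**
For odd `n ≥ 3` and `S ⊆ [n]` with `|S| ≥ 3` and `|Sᶜ|` even,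
`E_z[√(W^{≤1}[Maj_n|_{Sᶜ,z}])] ≤ 1 − 0.09/√n`. -/
theorem stmt15 (n : ℕ) (hn : 3 ≤ n) (hodd : Odd n) (S : Finset (Fin n))
    (hS : 3 ≤ S.card) (hSc : Even Sᶜ.card) :
    (∑ z : {i // i ∈ Sᶜ} → Bool,
        Real.sqrt (weightLE 1 (restrictTo (majFun (ι := Fin n)) Sᶜ z))) /
      (Fintype.card ({i // i ∈ Sᶜ} → Bool) : ℝ) ≤ 1 - 0.09 / Real.sqrt n :=
  stmt15_general n hodd S hS hSc
end
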